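/- The Smith–Kidger Type 6 element does not satisfy the weak orthogonality of Lemma 2: there exists a polynomial p in the Type 6 space P₂ ⊕ span{x₁x₂x₃, x₁x₂²x₃², x₁²x₂x₃², x₁²x₂²x₃} vanishing at the four points (1,±1,±1) and at (1,0,0), whose integral over the face {1}×[−1,1]² is nonzero. -/

import Mathlib

open MvPolynomial

noncomputable def SK6 : Submodule ℝ (MvPolynomial (Fin 3) ℝ) :=
  MvPolynomial.restrictTotalDegree (Fin 3) ℝ 2 ⊔
    Submodule.span ℝ {X 0 * X 1 * X 2, X 0 * X 1 ^ 2 * X 2 ^ 2,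
      X 0 ^ 2 * X 1 * X 2 ^ 2, X 0 ^ 2 * X 1 ^ 2 * X 2}

/-! The witness is `p = x₁x₂²x₃² - x₃²`. On the face `x₁ = 1` it restricts to `(y² - 1) z²`, which
vanishes at `(±1, ±1)` and at `(0, 0)`, while its integral over `[-1,1]²` splits as
`(∫ (y² - 1)) (∫ z²) = (-4/3)(2/3) ≠ 0`. -/

lemma mem_SK6_of_totalDegree_le_two {p : MvPolynomial (Fin 3) ℝ} (hp : p.totalDegree ≤ 2) :
    p ∈ SK6 :=
  Submodule.mem_sup_left ((mem_restrictTotalDegree _ _ _).2 hp)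

lemma X_zero_mul_X_one_sq_mul_X_two_sq_mem_SK6 : X 0 * X 1 ^ 2 * X 2 ^ 2 ∈ SK6 :=
  Submodule.mem_sup_right (Submodule.subset_span (by simp))

lemma intervalIntegral_integral_mul {𝕜 : Type*} [RCLike 𝕜] (a b c d : ℝ) (f g : ℝ → 𝕜) :
    ∫ y in a..b, ∫ z in c..d, f y * g z = (∫ y in a..b, f y) * ∫ z in c..d, g z := by
  simp_rw [intervalIntegral.integral_const_mul, intervalIntegral.integral_mul_const]

lemma integral_sq_sub_one : ∫ y in (-1 : ℝ)..1, (y ^ 2 - 1) = -4 / 3 := by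
  rw [intervalIntegral.integral_sub (intervalIntegral.intervalIntegrable_pow 2)
    intervalIntegrable_const, integral_pow]
  norm_num

theorem stmt18 :
    ∃ p ∈ SK6,
      eval ![1, 1, 1] p = 0 ∧ eval ![1, 1, -1] p = 0 ∧
      eval ![1, -1, 1] p = 0 ∧ eval ![1, -1, -1] p = 0 ∧
      eval ![1, 0, 0] p = 0 ∧
      (∫ y in (-1 : ℝ)..1, ∫ z in (-1 : ℝ)..1, eval ![1, y, z] p) ≠ 0 := by
  have h_face (y z : ℝ) :
      eval ![1, y, z] (X 0 * X 1 ^ 2 * X 2 ^ 2 - X 2 ^ 2) = (y ^ 2 - 1) * z ^ 2 := by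
    simp only [map_sub, map_mul, map_pow, eval_X, Matrix.cons_val_zero, Matrix.cons_val_one,
      Matrix.cons_val_two, Matrix.tail_cons, Matrix.head_cons]
    ring
  have h_mem : X 0 * X 1 ^ 2 * X 2 ^ 2 - X 2 ^ 2 ∈ SK6 :=
    SK6.sub_mem X_zero_mul_X_one_sq_mul_X_two_sq_mem_SK6
      (mem_SK6_of_totalDegree_le_two (totalDegree_X_pow 2 2).le)
  refine ⟨_, h_mem, ?_⟩
  simp only [h_face, intervalIntegral_integral_mul, integral_sq_sub_one, integral_pow]
  norm_num
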